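/- Let μ : (0,∞) → ℝ be twice continuously differentiable with μ(s) > 0 for all s > 0, φ : (0,∞) → ℝ with φ'(s) = μ(s)/s² for all s > 0, γ > 1, and p ≥ 0 a real number. Let Ω ⊆ ℝ² be open and ρ, u : Ω → ℝ twice continuously differentiable with ρ > 0 on Ω, satisfying ∂_t ρ + ∂_x(ρu) = 0 and ∂_t(ρu) + ∂_x(ρu²) − ∂_x(μ(ρ)∂_x u) + ∂_x(ρ^γ) = 0 on Ω. Set v = u + φ'(ρ)∂_x ρ. Then on Ω: ∂_t( ρ|v|^{p+2}/(p+2) ) + ∂_x( ρ u |v|^{p+2}/(p+2) ) + γ (ρ^{γ+1}/μ(ρ)) |v|^{p+2} = γ (ρ^{γ+1}/μ(ρ)) u v |v|^p. -/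

import Mathlib

/-!
Write `D_t = ∂ₜ + u ∂ₓ` for the material derivative and `w = φ(ρ)`, so that `v = u + ∂ₓw`.
The mass equation gives `ρ D_t w = -μ(ρ) ∂ₓu`; differentiating in `x`, Schwarz's theorem and
mass conservation turn this into `ρ D_t(∂ₓw) = -∂ₓ(μ(ρ) ∂ₓu)`. The momentum equation reads
`ρ D_t u = ∂ₓ(μ(ρ) ∂ₓu) - ∂ₓ(ρ^γ)`, so the viscous terms cancel in
`ρ D_t v = -∂ₓ(ρ^γ) = -γ ρ^(γ+1)/μ(ρ) (v - u)`. Finally, by mass conservation,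
`∂ₜ(ρ F(v)) + ∂ₓ(ρ u F(v)) = F'(v) ρ D_t v` for every differentiable `F`; take
`F(t) = |t|^(p+2)/(p+2)`, whose derivative is `|t|^p t`.
-/

open Real Set

/-- Partial derivative with respect to the first variable (time). -/
noncomputable def pdt (f : ℝ × ℝ → ℝ) (z : ℝ × ℝ) : ℝ := deriv (fun s => f (s, z.2)) z.1

/-- Partial derivative with respect to the second variable (space). -/
noncomputable def pdx (f : ℝ × ℝ → ℝ) (z : ℝ × ℝ) : ℝ := deriv (fun y => f (z.1, y)) z.2

open Filter Topology

section PartialDerivatives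

variable {f g : ℝ × ℝ → ℝ} {z : ℝ × ℝ}

lemma HasFDerivAt.hasDerivAt_slice_fst {E : Type*} [NormedAddCommGroup E] [NormedSpace ℝ E]
    {F : ℝ × ℝ → E} {F' : ℝ × ℝ →L[ℝ] E} (hF : HasFDerivAt F F' z) :
    HasDerivAt (fun s => F (s, z.2)) (F' (1, 0)) z.1 :=
  hF.comp_hasDerivAt z.1 ((hasDerivAt_id z.1).prodMk (hasDerivAt_const z.1 z.2))

lemma HasFDerivAt.hasDerivAt_slice_snd {E : Type*} [NormedAddCommGroup E] [NormedSpace ℝ E]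
    {F : ℝ × ℝ → E} {F' : ℝ × ℝ →L[ℝ] E} (hF : HasFDerivAt F F' z) :
    HasDerivAt (fun y => F (z.1, y)) (F' (0, 1)) z.2 :=
  hF.comp_hasDerivAt z.2 ((hasDerivAt_const z.2 z.1).prodMk (hasDerivAt_id z.2))

lemma DifferentiableAt.hasDerivAt_pdt (hf : DifferentiableAt ℝ f z) :
    HasDerivAt (fun s => f (s, z.2)) (pdt f z) z.1 :=
  hf.hasFDerivAt.hasDerivAt_slice_fst.differentiableAt.hasDerivAt

lemma DifferentiableAt.hasDerivAt_pdx (hf : DifferentiableAt ℝ f z) :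
    HasDerivAt (fun y => f (z.1, y)) (pdx f z) z.2 :=
  hf.hasFDerivAt.hasDerivAt_slice_snd.differentiableAt.hasDerivAt

lemma HasFDerivAt.pdt_eq {f' : ℝ × ℝ →L[ℝ] ℝ} (hf : HasFDerivAt f f' z) : pdt f z = f' (1, 0) :=
  hf.hasDerivAt_slice_fst.deriv

lemma HasFDerivAt.pdx_eq {f' : ℝ × ℝ →L[ℝ] ℝ} (hf : HasFDerivAt f f' z) : pdx f z = f' (0, 1) :=
  hf.hasDerivAt_slice_snd.deriv

lemma Filter.EventuallyEq.pdt_eq (h : f =ᶠ[𝓝 z] g) : pdt f z = pdt g z :=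
  EventuallyEq.deriv_eq <|
    ((continuous_id.prodMk continuous_const).tendsto' z.1 z rfl).eventually h

lemma Filter.EventuallyEq.pdx_eq (h : f =ᶠ[𝓝 z] g) : pdx f z = pdx g z :=
  EventuallyEq.deriv_eq <|
    ((continuous_const.prodMk continuous_id).tendsto' z.2 z rfl).eventually h

lemma pdt_add (hf : DifferentiableAt ℝ f z) (hg : DifferentiableAt ℝ g z) :
    pdt (fun q => f q + g q) z = pdt f z + pdt g z :=
  (hf.hasDerivAt_pdt.add hg.hasDerivAt_pdt).deriv

lemma pdx_add (hf : DifferentiableAt ℝ f z) (hg : DifferentiableAt ℝ g z) :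
    pdx (fun q => f q + g q) z = pdx f z + pdx g z :=
  (hf.hasDerivAt_pdx.add hg.hasDerivAt_pdx).deriv

lemma pdt_mul (hf : DifferentiableAt ℝ f z) (hg : DifferentiableAt ℝ g z) :
    pdt (fun q => f q * g q) z = pdt f z * g z + f z * pdt g z :=
  (hf.hasDerivAt_pdt.mul hg.hasDerivAt_pdt).deriv

lemma pdx_mul (hf : DifferentiableAt ℝ f z) (hg : DifferentiableAt ℝ g z) :
    pdx (fun q => f q * g q) z = pdx f z * g z + f z * pdx g z :=
  (hf.hasDerivAt_pdx.mul hg.hasDerivAt_pdx).deriv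

lemma pdx_neg : pdx (fun q => -f q) z = -pdx f z :=
  deriv.fun_neg

lemma pdt_comp {φ : ℝ → ℝ} {φ' : ℝ} (hφ : HasDerivAt φ φ' (f z)) (hf : DifferentiableAt ℝ f z) :
    pdt (fun q => φ (f q)) z = φ' * pdt f z :=
  (hφ.comp z.1 hf.hasDerivAt_pdt).deriv

lemma pdx_comp {φ : ℝ → ℝ} {φ' : ℝ} (hφ : HasDerivAt φ φ' (f z)) (hf : DifferentiableAt ℝ f z) :
    pdx (fun q => φ (f q)) z = φ' * pdx f z :=
  (hφ.comp z.2 hf.hasDerivAt_pdx).deriv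

lemma ContDiffAt.pdt_eventuallyEq (hf : ContDiffAt ℝ 2 f z) :
    pdt f =ᶠ[𝓝 z] fun q => fderiv ℝ f q (1, 0) :=
  (hf.eventually (by simp)).mono fun _ hq => (hq.differentiableAt two_ne_zero).hasFDerivAt.pdt_eq

lemma ContDiffAt.pdx_eventuallyEq (hf : ContDiffAt ℝ 2 f z) :
    pdx f =ᶠ[𝓝 z] fun q => fderiv ℝ f q (0, 1) :=
  (hf.eventually (by simp)).mono fun _ hq => (hq.differentiableAt two_ne_zero).hasFDerivAt.pdx_eq

lemma ContDiffAt.hasFDerivAt_fderiv_apply (hf : ContDiffAt ℝ 2 f z) (e : ℝ × ℝ) :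
    HasFDerivAt (fun q => fderiv ℝ f q e)
      ((ContinuousLinearMap.apply ℝ ℝ e).comp (fderiv ℝ (fderiv ℝ f) z)) z :=
  (ContinuousLinearMap.apply ℝ ℝ e).hasFDerivAt.comp z
    ((hf.fderiv_right le_rfl).differentiableAt one_ne_zero).hasFDerivAt

lemma ContDiffAt.differentiableAt_pdt (hf : ContDiffAt ℝ 2 f z) : DifferentiableAt ℝ (pdt f) z :=
  (hf.hasFDerivAt_fderiv_apply (1, 0)).differentiableAt.congr_of_eventuallyEq hf.pdt_eventuallyEq

lemma ContDiffAt.differentiableAt_pdx (hf : ContDiffAt ℝ 2 f z) : DifferentiableAt ℝ (pdx f) z :=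
  (hf.hasFDerivAt_fderiv_apply (0, 1)).differentiableAt.congr_of_eventuallyEq hf.pdx_eventuallyEq

lemma ContDiffAt.pdt_pdx_comm (hf : ContDiffAt ℝ 2 f z) : pdt (pdx f) z = pdx (pdt f) z := by
  rw [hf.pdx_eventuallyEq.pdt_eq, hf.pdt_eventuallyEq.pdx_eq,
    (hf.hasFDerivAt_fderiv_apply (0, 1)).pdt_eq, (hf.hasFDerivAt_fderiv_apply (1, 0)).pdx_eq]
  exact hf.isSymmSndFDerivAt (by simp) _ _

end PartialDerivatives

lemma contDiffOn_succ_of_hasDerivAt {φ φ' : ℝ → ℝ} {U : Set ℝ} {n : ℕ} (hU : IsOpen U)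
    (hφ : ∀ s ∈ U, HasDerivAt φ (φ' s) s) (hφ' : ContDiffOn ℝ n φ' U) :
    ContDiffOn ℝ (n + 1) φ U :=
  (contDiffOn_succ_iff_deriv_of_isOpen hU).2
    ⟨fun s hs => (hφ s hs).differentiableAt.differentiableWithinAt, by simp,
      hφ'.congr fun s hs => (hφ s hs).deriv⟩

lemma hasDerivAt_abs_rpow_add_two_div {p : ℝ} (hp : 0 ≤ p) (t : ℝ) :
    HasDerivAt (fun t : ℝ => |t| ^ (p + 2) / (p + 2)) (|t| ^ p * t) t := by
  have hsq (q s : ℝ) : |s| ^ q = (s ^ 2) ^ (q / 2) := by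
    rw [← sq_abs, ← rpow_natCast, ← rpow_mul (abs_nonneg s), Nat.cast_ofNat,
      mul_div_cancel₀ q two_ne_zero]
  have h := (hasDerivAt_rpow_const (x := t ^ 2) (p := (p + 2) / 2) (Or.inr (by linarith))).comp t
    (hasDerivAt_pow 2 t)
  refine ((h.congr_of_eventuallyEq (.of_forall fun s => hsq _ s)).div_const (p + 2)).congr_deriv ?_
  rw [hsq p t, show (p + 2) / 2 - 1 = p / 2 by ring]
  field_simp
  push_cast
  ring

noncomputable def materialDeriv (u f : ℝ × ℝ → ℝ) (q : ℝ × ℝ) : ℝ := pdt f q + u q * pdx f q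

section Transport

variable {ρ u v f g : ℝ × ℝ → ℝ} {z : ℝ × ℝ}

lemma Filter.EventuallyEq.materialDeriv_eq (h : f =ᶠ[𝓝 z] g) :
    materialDeriv u f z = materialDeriv u g z := by
  rw [materialDeriv, materialDeriv, h.pdt_eq, h.pdx_eq]

lemma materialDeriv_add (hf : DifferentiableAt ℝ f z) (hg : DifferentiableAt ℝ g z) :
    materialDeriv u (fun q => f q + g q) z = materialDeriv u f z + materialDeriv u g z := by
  rw [materialDeriv, materialDeriv, materialDeriv, pdt_add hf hg, pdx_add hf hg]
  ring

lemma materialDeriv_comp {φ : ℝ → ℝ} {φ' : ℝ} (hφ : HasDerivAt φ φ' (f z))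
    (hf : DifferentiableAt ℝ f z) :
    materialDeriv u (fun q => φ (f q)) z = φ' * materialDeriv u f z := by
  rw [materialDeriv, materialDeriv, pdt_comp hφ hf, pdx_comp hφ hf]
  ring

lemma pdt_mul_add_pdx_mul_mul (hρ : DifferentiableAt ℝ ρ z) (hu : DifferentiableAt ℝ u z)
    (hg : DifferentiableAt ℝ g z) :
    pdt (fun q => ρ q * g q) z + pdx (fun q => ρ q * u q * g q) z
      = (pdt ρ z + pdx (fun q => ρ q * u q) z) * g z + ρ z * materialDeriv u g z := by
  rw [pdt_mul hρ hg, pdx_mul (f := fun q => ρ q * u q) (hρ.mul hu) hg, materialDeriv]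
  ring

lemma materialDeriv_of_mass (hρ : DifferentiableAt ℝ ρ z) (hu : DifferentiableAt ℝ u z)
    (hmass : pdt ρ z + pdx (fun q => ρ q * u q) z = 0) :
    materialDeriv u ρ z = -(ρ z * pdx u z) := by
  rw [pdx_mul hρ hu] at hmass
  rw [materialDeriv]
  linarith

lemma mul_materialDeriv_comp_of_mass {φ μ : ℝ → ℝ} (hρ : DifferentiableAt ℝ ρ z)
    (hu : DifferentiableAt ℝ u z) (hmass : pdt ρ z + pdx (fun q => ρ q * u q) z = 0)
    (hρz : ρ z ≠ 0) (hφ : HasDerivAt φ (μ (ρ z) / ρ z ^ 2) (ρ z)) :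
    ρ z * materialDeriv u (fun q => φ (ρ q)) z = -(μ (ρ z) * pdx u z) := by
  rw [materialDeriv_comp hφ hρ, materialDeriv_of_mass hρ hu hmass]
  field_simp

lemma pdx_mul_materialDeriv_comp {φ : ℝ → ℝ} (hρ : DifferentiableAt ℝ ρ z)
    (hu : DifferentiableAt ℝ u z) (hmass : pdt ρ z + pdx (fun q => ρ q * u q) z = 0)
    (hφ : DifferentiableAt ℝ φ (ρ z)) (hw : ContDiffAt ℝ 2 (fun q => φ (ρ q)) z) :
    pdx (fun q => ρ q * materialDeriv u (fun q => φ (ρ q)) q) z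
      = ρ z * materialDeriv u (pdx fun q => φ (ρ q)) z := by
  have hwt := hw.differentiableAt_pdt
  have hwx := hw.differentiableAt_pdx
  have hmat : DifferentiableAt ℝ (materialDeriv u fun q => φ (ρ q)) z := hwt.add (hu.mul hwx)
  rw [pdx_mul hρ hmat]
  unfold materialDeriv
  rw [pdx_add (g := fun q => u q * pdx (fun q => φ (ρ q)) q) hwt (hu.mul hwx), pdx_mul hu hwx,
    ← hw.pdt_pdx_comm, pdt_comp hφ.hasDerivAt hρ, pdx_comp hφ.hasDerivAt hρ]
  rw [pdx_mul hρ hu] at hmass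
  -- the remaining terms are `∂ₓρ ∂ₜw - ∂ₜρ ∂ₓw`, zero as `w` is a function of `ρ`, plus a multiple
  -- of the mass equation
  linear_combination deriv φ (ρ z) * pdx ρ z * hmass

lemma mul_materialDeriv_eq_neg_pdx_of_momentum {μ φ : ℝ → ℝ} {P : ℝ × ℝ → ℝ}
    (hρ : DifferentiableAt ℝ ρ z) (hu : DifferentiableAt ℝ u z)
    (hmass : pdt ρ z + pdx (fun q => ρ q * u q) z = 0)
    (hmom : pdt (fun q => ρ q * u q) z + pdx (fun q => ρ q * u q ^ 2) z
      - pdx (fun q => μ (ρ q) * pdx u q) z + pdx P z = 0)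
    (hφ : DifferentiableAt ℝ φ (ρ z)) (hw : ContDiffAt ℝ 2 (fun q => φ (ρ q)) z)
    (hwμ : (fun q => ρ q * materialDeriv u (fun q => φ (ρ q)) q)
      =ᶠ[𝓝 z] fun q => -(μ (ρ q) * pdx u q))
    (hv : v =ᶠ[𝓝 z] fun q => u q + pdx (fun q => φ (ρ q)) q) :
    ρ z * materialDeriv u v z = -pdx P z := by
  have hconv : pdt (fun q => ρ q * u q) z + pdx (fun q => ρ q * u q ^ 2) z
      = ρ z * materialDeriv u u z := by
    simp_rw [sq, ← mul_assoc]
    rw [pdt_mul_add_pdx_mul_mul hρ hu hu, hmass, zero_mul, zero_add]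
  have hviscous : ρ z * materialDeriv u (pdx fun q => φ (ρ q)) z
      = -pdx (fun q => μ (ρ q) * pdx u q) z := by
    rw [← pdx_mul_materialDeriv_comp hρ hu hmass hφ hw, hwμ.pdx_eq, pdx_neg]
  rw [hv.materialDeriv_eq, materialDeriv_add hu hw.differentiableAt_pdx, mul_add, hviscous]
  linear_combination hmom - hconv

lemma pdt_mul_comp_add_pdx_mul_mul_comp {F : ℝ → ℝ} {F' : ℝ} (hρ : DifferentiableAt ℝ ρ z)
    (hu : DifferentiableAt ℝ u z) (hv : DifferentiableAt ℝ v z)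
    (hmass : pdt ρ z + pdx (fun q => ρ q * u q) z = 0) (hF : HasDerivAt F F' (v z)) :
    pdt (fun q => ρ q * F (v q)) z + pdx (fun q => ρ q * u q * F (v q)) z
      = F' * (ρ z * materialDeriv u v z) := by
  rw [pdt_mul_add_pdx_mul_mul (g := fun q => F (v q)) hρ hu (hF.differentiableAt.comp z hv), hmass,
    materialDeriv_comp hF hv]
  ring

lemma pdx_rpow_eq_mul_sub {μ : ℝ → ℝ} {γ : ℝ} (hρ : DifferentiableAt ℝ ρ z) (hρz : 0 < ρ z)
    (hμ : μ (ρ z) ≠ 0) (hv : v z = u z + μ (ρ z) / ρ z ^ 2 * pdx ρ z) :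
    pdx (fun q => ρ q ^ γ) z = γ * (ρ z ^ (γ + 1) / μ (ρ z)) * (v z - u z) := by
  rw [pdx_comp (hasDerivAt_rpow_const (Or.inl hρz.ne')) hρ, hv, show γ + 1 = γ - 1 + 2 by ring,
    rpow_add hρz, rpow_two]
  field_simp
  ring

end Transport

theorem stmt_6_general (μ φ : ℝ → ℝ) (γ p : ℝ) (Ω : Set (ℝ × ℝ)) (ρ u v : ℝ × ℝ → ℝ)
    (hμ : ContDiffOn ℝ 2 μ (Set.Ioi 0))
    (hμpos : ∀ s : ℝ, 0 < s → 0 < μ s)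
    (hφ : ∀ s : ℝ, 0 < s → HasDerivAt φ (μ s / s ^ 2) s)
    (hp : 0 ≤ p) (hΩ : IsOpen Ω)
    (hρC : ContDiffOn ℝ 2 ρ Ω) (huC : ContDiffOn ℝ 2 u Ω)
    (hρpos : ∀ z ∈ Ω, 0 < ρ z)
    (hmass : ∀ z ∈ Ω, pdt ρ z + pdx (fun q => ρ q * u q) z = 0)
    (hmom : ∀ z ∈ Ω,
      pdt (fun q => ρ q * u q) z + pdx (fun q => ρ q * u q ^ 2) z
        - pdx (fun q => μ (ρ q) * pdx u q) z + pdx (fun q => ρ q ^ γ) z = 0)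
    (hv : ∀ q, v q = u q + deriv φ (ρ q) * pdx ρ q) :
    ∀ z ∈ Ω,
      pdt (fun q => ρ q * |v q| ^ (p + 2) / (p + 2)) z
        + pdx (fun q => ρ q * u q * |v q| ^ (p + 2) / (p + 2)) z
        + γ * (ρ z ^ (γ + 1) / μ (ρ z)) * |v z| ^ (p + 2)
        = γ * (ρ z ^ (γ + 1) / μ (ρ z)) * u z * v z * |v z| ^ p := by
  intro z hz
  have hΩz : Ω ∈ 𝓝 z := hΩ.mem_nhds hz
  have hρz : 0 < ρ z := hρpos z hz
  have hρd (q) (hq : q ∈ Ω) : DifferentiableAt ℝ ρ q :=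
    (hρC.differentiableOn two_ne_zero).differentiableAt (hΩ.mem_nhds hq)
  have hud (q) (hq : q ∈ Ω) : DifferentiableAt ℝ u q :=
    (huC.differentiableOn two_ne_zero).differentiableAt (hΩ.mem_nhds hq)
  have hφC : ContDiffOn ℝ 2 φ (Ioi 0) := contDiffOn_succ_of_hasDerivAt (n := 1) isOpen_Ioi hφ
    ((hμ.of_le one_le_two).div (contDiffOn_id.pow 2) fun s hs => pow_ne_zero 2 (ne_of_gt hs))
  have hw : ContDiffAt ℝ 2 (fun q => φ (ρ q)) z :=
    (hφC.contDiffAt (Ioi_mem_nhds hρz)).comp z (hρC.contDiffAt hΩz)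
  have hvw : v =ᶠ[𝓝 z] fun q => u q + pdx (fun q => φ (ρ q)) q :=
    eventually_of_mem hΩz fun q hq => show v q = u q + pdx (fun q => φ (ρ q)) q by
      rw [hv q, pdx_comp (hφ _ (hρpos q hq)).differentiableAt.hasDerivAt (hρd q hq)]
  have hwμ : (fun q => ρ q * materialDeriv u (fun q => φ (ρ q)) q)
      =ᶠ[𝓝 z] fun q => -(μ (ρ q) * pdx u q) :=
    eventually_of_mem hΩz fun q hq => mul_materialDeriv_comp_of_mass (hρd q hq) (hud q hq)
      (hmass q hq) (hρpos q hq).ne' (hφ _ (hρpos q hq))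
  have htransport := mul_materialDeriv_eq_neg_pdx_of_momentum (hρd z hz) (hud z hz) (hmass z hz)
    (hmom z hz) (hφ _ hρz).differentiableAt hw hwμ hvw
  have hpress := pdx_rpow_eq_mul_sub (u := u) (v := v) (γ := γ) (hρd z hz) hρz
    (hμpos _ hρz).ne' (by rw [hv z, (hφ _ hρz).deriv])
  simp_rw [mul_div_assoc]
  rw [pdt_mul_comp_add_pdx_mul_mul_comp (hρd z hz) (hud z hz)
    (((hud z hz).add hw.differentiableAt_pdx).congr_of_eventuallyEq hvw) (hmass z hz)
    (hasDerivAt_abs_rpow_add_two_div hp (v z)), htransport, hpress,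
    rpow_add' (abs_nonneg _) (by linarith), rpow_two, sq_abs]
  ring

theorem stmt_6 (μ φ : ℝ → ℝ) (γ p : ℝ) (Ω : Set (ℝ × ℝ)) (ρ u v : ℝ × ℝ → ℝ)
    (hμ : ContDiffOn ℝ 2 μ (Set.Ioi 0))
    (hμpos : ∀ s : ℝ, 0 < s → 0 < μ s)
    (hφ : ∀ s : ℝ, 0 < s → HasDerivAt φ (μ s / s ^ 2) s)
    (hγ : 1 < γ) (hp : 0 ≤ p) (hΩ : IsOpen Ω)
    (hρC : ContDiffOn ℝ 2 ρ Ω) (huC : ContDiffOn ℝ 2 u Ω)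
    (hρpos : ∀ z ∈ Ω, 0 < ρ z)
    (hmass : ∀ z ∈ Ω, pdt ρ z + pdx (fun q => ρ q * u q) z = 0)
    (hmom : ∀ z ∈ Ω,
      pdt (fun q => ρ q * u q) z + pdx (fun q => ρ q * u q ^ 2) z
        - pdx (fun q => μ (ρ q) * pdx u q) z + pdx (fun q => ρ q ^ γ) z = 0)
    (hv : ∀ q, v q = u q + deriv φ (ρ q) * pdx ρ q) :
    ∀ z ∈ Ω,
      pdt (fun q => ρ q * |v q| ^ (p + 2) / (p + 2)) z
        + pdx (fun q => ρ q * u q * |v q| ^ (p + 2) / (p + 2)) z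
        + γ * (ρ z ^ (γ + 1) / μ (ρ z)) * |v z| ^ (p + 2)
        = γ * (ρ z ^ (γ + 1) / μ (ρ z)) * u z * v z * |v z| ^ p :=
  stmt_6_general μ φ γ p Ω ρ u v hμ hμpos hφ hp hΩ hρC huC hρpos hmass hmom hv
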